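/- Fix a real m×m matrix A, an integer N ≥ 1, and real m×n matrices f_t and b_t for t = 1, …, N. Define E(A, B) = Σ_{t=1}^{N} ( ‖f_t − A b_t Bᵀ‖_F² + ‖b_t − A f_t Bᵀ‖_F² ), P = Σ_{t=1}^{N} [ (A b_t)ᵀ (A b_t) + (A f_t)ᵀ (A f_t) ] and Q = Σ_{t=1}^{N} [ b_tᵀ Aᵀ f_t + f_tᵀ Aᵀ b_t ]. If a real n×n matrix B* satisfies P (B*)ᵀ = Q, then E(A, B*) ≤ E(A, B) for every real n×n matrix B. In particular, if P is invertible, then (B*)ᵀ = P⁻¹ Q is (the transpose of) a global minimizer of B ↦ E(A, B). -/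

import Mathlib

/-!
As a function of `Bᵀ`, the error `E(A, ·)` is a sum of squared Frobenius norms of residuals that
are affine in `Bᵀ`. Writing `Bᵀ = Bstarᵀ + D`, each residual splits into the residual at `Bstar`
minus `A b_t D` (resp. `A f_t D`), and the total cross term is `-2 tr ((Qᵀ - Bstar P) D)`.
Since `P` is symmetric, the normal equations `P Bstarᵀ = Q` make `Qᵀ - Bstar P` vanish, so
`E(A, B) = E(A, Bstar) + Σ_t (‖A b_t D‖² + ‖A f_t D‖²) ≥ E(A, Bstar)`.
-/

open Matrix

/-- Frobenius norm of a real matrix. -/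
noncomputable def frobNorm {p q : ℕ} (M : Matrix (Fin p) (Fin q) ℝ) : ℝ :=
  Real.sqrt (∑ i, ∑ j, M i j ^ 2)

/-- The Burg-type total prediction error `E(A, B)`. -/
noncomputable def burgE {m n N : ℕ} (f b : Fin N → Matrix (Fin m) (Fin n) ℝ)
    (A : Matrix (Fin m) (Fin m) ℝ) (B : Matrix (Fin n) (Fin n) ℝ) : ℝ :=
  ∑ t, (frobNorm (f t - A * b t * Bᵀ) ^ 2 + frobNorm (b t - A * f t * Bᵀ) ^ 2)

/-- `P = Σ_t [(A b_t)ᵀ (A b_t) + (A f_t)ᵀ (A f_t)]`. -/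
def burgP {m n N : ℕ} (A : Matrix (Fin m) (Fin m) ℝ)
    (f b : Fin N → Matrix (Fin m) (Fin n) ℝ) : Matrix (Fin n) (Fin n) ℝ :=
  ∑ t, ((A * b t)ᵀ * (A * b t) + (A * f t)ᵀ * (A * f t))

/-- `Q = Σ_t [b_tᵀ Aᵀ f_t + f_tᵀ Aᵀ b_t]`. -/
def burgQ {m n N : ℕ} (A : Matrix (Fin m) (Fin m) ℝ)
    (f b : Fin N → Matrix (Fin m) (Fin n) ℝ) : Matrix (Fin n) (Fin n) ℝ :=
  ∑ t, ((b t)ᵀ * Aᵀ * f t + (f t)ᵀ * Aᵀ * b t)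

theorem Matrix.trace_transpose_sub_mul_sub {m n R : Type*} [Fintype m] [Fintype n] [CommRing R]
    (U V : Matrix m n R) :
    trace ((U - V)ᵀ * (U - V)) = trace (Uᵀ * U) - 2 * trace (Uᵀ * V) + trace (Vᵀ * V) := by
  rw [transpose_sub, Matrix.sub_mul, Matrix.mul_sub, Matrix.mul_sub, trace_sub, trace_sub,
    trace_sub, ← trace_transpose (Vᵀ * U), transpose_mul, transpose_transpose]
  ring

theorem frobNorm_sq {p q : ℕ} (M : Matrix (Fin p) (Fin q) ℝ) :
    frobNorm M ^ 2 = trace (Mᵀ * M) := by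
  rw [frobNorm, Real.sq_sqrt (by positivity)]
  simp only [trace, diag, mul_apply, transpose_apply, ← sq]
  exact Finset.sum_comm

theorem frobNorm_sub_sq {p q : ℕ} (U V : Matrix (Fin p) (Fin q) ℝ) :
    frobNorm (U - V) ^ 2 = frobNorm U ^ 2 - 2 * trace (Uᵀ * V) + frobNorm V ^ 2 := by
  simp only [frobNorm_sq, trace_transpose_sub_mul_sub]

section Burg

variable {m n N : ℕ} (A : Matrix (Fin m) (Fin m) ℝ) (f b : Fin N → Matrix (Fin m) (Fin n) ℝ)

theorem burgP_transpose : (burgP A f b)ᵀ = burgP A f b := by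
  simp only [burgP, transpose_sum, transpose_add, transpose_mul, transpose_transpose]

theorem burgQ_transpose_sub_mul_burgP (S : Matrix (Fin n) (Fin n) ℝ) :
    (burgQ A f b)ᵀ - Sᵀ * burgP A f b =
      ∑ t, ((f t - A * b t * S)ᵀ * (A * b t) + (b t - A * f t * S)ᵀ * (A * f t)) := by
  have hres : ∀ X Y : Matrix (Fin m) (Fin n) ℝ, (X - Y * S)ᵀ * Y = Xᵀ * Y - Sᵀ * (Yᵀ * Y) := by
    intro X Y
    rw [transpose_sub, transpose_mul, Matrix.sub_mul, Matrix.mul_assoc]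
  simp only [hres, burgQ, burgP, transpose_sum, Finset.mul_sum, ← Finset.sum_sub_distrib]
  refine Finset.sum_congr rfl fun t _ => ?_
  simp only [transpose_add, transpose_mul, transpose_transpose, Matrix.mul_add, Matrix.mul_assoc]
  abel

theorem sum_residual_mul_eq_zero {Bstar : Matrix (Fin n) (Fin n) ℝ}
    (hPQ : burgP A f b * Bstarᵀ = burgQ A f b) :
    ∑ t, ((f t - A * b t * Bstarᵀ)ᵀ * (A * b t) + (b t - A * f t * Bstarᵀ)ᵀ * (A * f t)) = 0 := by
  rw [← burgQ_transpose_sub_mul_burgP, ← hPQ, transpose_mul, burgP_transpose, sub_self]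

theorem burgE_eq_add_of_normal_eq {Bstar : Matrix (Fin n) (Fin n) ℝ}
    (hPQ : burgP A f b * Bstarᵀ = burgQ A f b) (B : Matrix (Fin n) (Fin n) ℝ) :
    burgE f b A B = burgE f b A Bstar +
      ∑ t, (frobNorm (A * b t * (B - Bstar)ᵀ) ^ 2 + frobNorm (A * f t * (B - Bstar)ᵀ) ^ 2) := by
  set D := (B - Bstar)ᵀ
  have hsplit : ∀ X Y : Matrix (Fin m) (Fin n) ℝ, X - Y * Bᵀ = (X - Y * Bstarᵀ) - Y * D := by
    intro X Y
    simp only [D, transpose_sub, Matrix.mul_sub]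
    abel
  have hcross : ∑ t, (trace ((f t - A * b t * Bstarᵀ)ᵀ * (A * b t * D)) +
      trace ((b t - A * f t * Bstarᵀ)ᵀ * (A * f t * D))) = 0 := by
    have hfactor : ∀ R R' Y Y' : Matrix (Fin m) (Fin n) ℝ,
        trace (Rᵀ * (Y * D)) + trace (R'ᵀ * (Y' * D)) = trace ((Rᵀ * Y + R'ᵀ * Y') * D) := by
      intro R R' Y Y'
      rw [Matrix.add_mul, trace_add, Matrix.mul_assoc, Matrix.mul_assoc]
    simp only [hfactor, ← trace_sum, ← Finset.sum_mul, sum_residual_mul_eq_zero A f b hPQ,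
      Matrix.zero_mul, trace_zero]
  simp only [burgE, hsplit, frobNorm_sub_sq, Finset.sum_add_distrib, Finset.sum_sub_distrib,
    ← Finset.mul_sum] at hcross ⊢
  linear_combination (-2) * hcross

theorem burgE_le_of_normal_eq {Bstar : Matrix (Fin n) (Fin n) ℝ}
    (hPQ : burgP A f b * Bstarᵀ = burgQ A f b) (B : Matrix (Fin n) (Fin n) ℝ) :
    burgE f b A Bstar ≤ burgE f b A B := by
  rw [burgE_eq_add_of_normal_eq A f b hPQ B]
  exact le_add_of_nonneg_right (Finset.sum_nonneg fun t _ => by positivity)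

end Burg

theorem stmt15_general (m n N : ℕ) (A : Matrix (Fin m) (Fin m) ℝ)
    (f b : Fin N → Matrix (Fin m) (Fin n) ℝ) :
    (∀ Bstar : Matrix (Fin n) (Fin n) ℝ,
      burgP A f b * Bstarᵀ = burgQ A f b →
        ∀ B : Matrix (Fin n) (Fin n) ℝ, burgE f b A Bstar ≤ burgE f b A B) ∧
    (IsUnit (burgP A f b) →
      ∀ B : Matrix (Fin n) (Fin n) ℝ,
        burgE f b A (((burgP A f b)⁻¹ * burgQ A f b)ᵀ) ≤ burgE f b A B) := by
  refine ⟨fun _ hPQ => burgE_le_of_normal_eq A f b hPQ, fun hP => burgE_le_of_normal_eq A f b ?_⟩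
  rw [transpose_transpose]
  exact Matrix.mul_nonsing_inv_cancel_left _ _ ((isUnit_iff_isUnit_det _).mp hP)

theorem stmt15 (m n N : ℕ) (hN : 1 ≤ N) (A : Matrix (Fin m) (Fin m) ℝ)
    (f b : Fin N → Matrix (Fin m) (Fin n) ℝ) :
    (∀ Bstar : Matrix (Fin n) (Fin n) ℝ,
      burgP A f b * Bstarᵀ = burgQ A f b →
        ∀ B : Matrix (Fin n) (Fin n) ℝ, burgE f b A Bstar ≤ burgE f b A B) ∧
    (IsUnit (burgP A f b) →
      ∀ B : Matrix (Fin n) (Fin n) ℝ,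
        burgE f b A (((burgP A f b)⁻¹ * burgQ A f b)ᵀ) ≤ burgE f b A B) :=
  stmt15_general m n N A f b
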